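/- arXiv:1703.02636 — 3 statements merged into one kernel-verified Lean document; each statement's English description precedes it below -/
import Mathlib

section
/- (Discrete Grönwall inequality.) Let γ ∈ (0,1), k > 0, let f be nonnegative, non-decreasing and locally Lipschitz on [0,∞), let u₀ > 0, and let u be the unique solution of D_c^γ u = f(u), u(0) = u₀, on its maximal interval [0, T_b). Suppose (wⁿ)_{0≤n≤N} is a sequence of nonnegative reals satisfying either wⁿ ≤ u₀ + (k^γ/Γ(1+γ)) ∑_{m=0}^{n−1} f(wᵐ) ((n−m)^γ − (n−m−1)^γ) for all 0 ≤ n ≤ N, or wⁿ ≤ u₀ + (k^γ/Γ(γ)) ∑_{m=0}^{n−1} f(wᵐ) (n−m)^{γ−1} for all 0 ≤ n ≤ N. Then wⁿ ≤ u(nk) for all n with 0 ≤ n ≤ N and n < T_b/k. -/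
open MeasureTheory Real Filter Set Asymptotics
open scoped ENNReal Topology

/-- `u` is a solution of the Volterra integral form of the fractional ODE
`D_c^γ u = f(u)`, `u(0) = u₀`, on the interval `[0, T)` (with `T ∈ (0,∞]`),
taking values in the set `D`. -/
noncomputable def IsSolUpTo (γ : ℝ) (f : ℝ → ℝ) (D : Set ℝ) (u₀ : ℝ) (u : ℝ → ℝ)
    (T : ℝ≥0∞) : Prop :=
  u 0 = u₀ ∧
  ContinuousOn u {t : ℝ | 0 ≤ t ∧ ENNReal.ofReal t < T} ∧
  (∀ t : ℝ, 0 ≤ t → ENNReal.ofReal t < T → u t ∈ D) ∧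
  (∀ t : ℝ, 0 ≤ t → ENNReal.ofReal t < T →
    u t = u₀ + (1 / Real.Gamma γ) * ∫ s in (0:ℝ)..t, (t - s) ^ (γ - 1) * f (u s))

/-- The maximal existence time `T_b`: the supremum of all `T` such that a solution
exists on `[0, T)`. -/
noncomputable def maxTime (γ : ℝ) (f : ℝ → ℝ) (D : Set ℝ) (u₀ : ℝ) : ℝ≥0∞ :=
  sSup {T : ℝ≥0∞ | ∃ u : ℝ → ℝ, IsSolUpTo γ f D u₀ u T}

/-! ### Auxiliary lemmas -/

lemma ker_intble {γ : ℝ} (hγ : 0 < γ) (t a b : ℝ) :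
    IntervalIntegrable (fun s => (t - s) ^ (γ - 1)) volume a b := by
  have h : IntervalIntegrable (fun x : ℝ => x ^ (γ - 1)) volume (t - a) (t - b) :=
    intervalIntegral.intervalIntegrable_rpow' (by linarith)
  simpa using h.comp_sub_left t

lemma ker_mul_intble {γ : ℝ} (hγ : 0 < γ) (t : ℝ) {a b : ℝ} {g : ℝ → ℝ}
    (hg : ContinuousOn g (Set.uIcc a b)) :
    IntervalIntegrable (fun s => (t - s) ^ (γ - 1) * g s) volume a b :=
  (ker_intble hγ t a b).mul_continuousOn hg

lemma ker_integral {γ : ℝ} (hγ : 0 < γ) {t a b : ℝ} (hbt : b ≤ t) :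
    ∫ s in a..b, (t - s) ^ (γ - 1) = ((t - a) ^ γ - (t - b) ^ γ) / γ := by
  rw [intervalIntegral.integral_comp_sub_left (fun x : ℝ => x ^ (γ - 1)) t,
    integral_rpow (Or.inl (by linarith)), sub_add_cancel]

lemma f_contOn {f : ℝ → ℝ}
    (hflip : ∀ x ∈ Set.Ici (0:ℝ), ∃ K : NNReal, ∃ s ∈ 𝓝[Set.Ici (0:ℝ)] x,
      LipschitzOnWith K f s) :
    ContinuousOn f (Set.Ici 0) := by
  intro x hx
  obtain ⟨K, s, hs, hK⟩ := hflip x hx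
  have hxs : x ∈ s := mem_of_mem_nhdsWithin hx hs
  exact (hK.continuousOn.continuousWithinAt hxs).mono_of_mem_nhdsWithin hs

/-- Comparison: a supersolution dominates the solution. -/
lemma comparison {γ : ℝ} (hγ0 : 0 < γ) {f : ℝ → ℝ}
    (hfmono : MonotoneOn f (Set.Ici 0))
    (hflip : ∀ x ∈ Set.Ici (0:ℝ), ∃ K : NNReal, ∃ s ∈ 𝓝[Set.Ici (0:ℝ)] x,
      LipschitzOnWith K f s)
    {u₀ T : ℝ} (hT : 0 ≤ T) {u v : ℝ → ℝ}
    (hu_cont : ContinuousOn u (Set.Icc 0 T)) (hv_cont : ContinuousOn v (Set.Icc 0 T))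
    (hu_nn : ∀ t ∈ Set.Icc (0:ℝ) T, 0 ≤ u t) (hv_nn : ∀ t ∈ Set.Icc (0:ℝ) T, 0 ≤ v t)
    (hu_eq : ∀ t ∈ Set.Icc (0:ℝ) T,
      u t = u₀ + (1 / Real.Gamma γ) * ∫ s in (0:ℝ)..t, (t - s) ^ (γ - 1) * f (u s))
    (hv_ge : ∀ t ∈ Set.Icc (0:ℝ) T,
      u₀ + (1 / Real.Gamma γ) * ∫ s in (0:ℝ)..t, (t - s) ^ (γ - 1) * f (v s) ≤ v t) :
    ∀ t ∈ Set.Icc (0:ℝ) T, u t ≤ v t := by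
  have hΓ : 0 < Real.Gamma γ := Real.Gamma_pos_of_pos hγ0
  have hfc : ContinuousOn f (Set.Ici 0) := f_contOn hflip
  have hu0 : u 0 = u₀ := by simpa using hu_eq 0 ⟨le_rfl, hT⟩
  have hv0 : u₀ ≤ v 0 := by simpa using hv_ge 0 ⟨le_rfl, hT⟩
  set S : Set ℝ := {t | t ∈ Set.Icc (0:ℝ) T ∧ ∀ s ∈ Set.Icc (0:ℝ) t, u s ≤ v s} with hSdef
  have h0S : (0:ℝ) ∈ S := by
    refine ⟨⟨le_rfl, hT⟩, fun s hs => ?_⟩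
    have hs0 : s = 0 := le_antisymm hs.2 hs.1
    rw [hs0, hu0]; exact hv0
  have hSbdd : BddAbove S := ⟨T, fun t ht => ht.1.2⟩
  have hSne : S.Nonempty := ⟨0, h0S⟩
  set c := sSup S with hcdef
  have hc0 : 0 ≤ c := le_csSup hSbdd h0S
  have hcT : c ≤ T := csSup_le hSne fun t ht => ht.1.2
  have hcmem : c ∈ Set.Icc (0:ℝ) T := ⟨hc0, hcT⟩
  have hlt : ∀ s, 0 ≤ s → s < c → u s ≤ v s := by
    intro s hs0 hsc
    obtain ⟨t, htS, hst⟩ := exists_lt_of_lt_csSup hSne hsc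
    exact htS.2 s ⟨hs0, hst.le⟩
  have hP : ∀ s ∈ Set.Icc (0:ℝ) c, u s ≤ v s := by
    have hcc : u c ≤ v c := by
      rcases eq_or_lt_of_le hc0 with h0 | h0
      · rw [← h0, hu0]; exact hv0
      · have hne : (𝓝[Set.Ico (0:ℝ) c] c).NeBot := by
          apply mem_closure_iff_nhdsWithin_neBot.mp
          rw [closure_Ico (ne_of_lt h0)]
          exact ⟨hc0, le_rfl⟩
        have hsub : Set.Ico (0:ℝ) c ⊆ Set.Icc (0:ℝ) T :=
          fun x hx => ⟨hx.1, hx.2.le.trans hcT⟩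
        have hvu : Filter.Tendsto (fun x => v x - u x) (𝓝[Set.Ico (0:ℝ) c] c)
            (𝓝 (v c - u c)) :=
          ((hv_cont.continuousWithinAt hcmem).mono hsub).sub
            ((hu_cont.continuousWithinAt hcmem).mono hsub)
        have h00 : (0:ℝ) ≤ v c - u c := by
          refine ge_of_tendsto hvu ?_
          filter_upwards [self_mem_nhdsWithin] with x hx
          exact sub_nonneg.mpr (hlt x hx.1 hx.2)
        linarith
    intro s hs
    rcases lt_or_eq_of_le hs.2 with h | h
    · exact hlt s hs.1 h
    · rw [h]; exact hcc
  have hcS : c ∈ S := ⟨hcmem, hP⟩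
  have hceq : c = T := by
    by_contra hneq
    have hcltT : c < T := lt_of_le_of_ne hcT hneq
    set y := v c with hydef
    have hy0 : (0:ℝ) ≤ y := hv_nn c hcmem
    have huc : u c ≤ y := hP c ⟨hc0, le_rfl⟩
    obtain ⟨K, sy, hsy, hK⟩ := hflip y hy0
    obtain ⟨ε, hε, hball⟩ := Metric.mem_nhdsWithin_iff.mp hsy
    have t1 : Filter.Tendsto u (𝓝[Set.Icc (0:ℝ) T] c) (𝓝 (u c)) :=
      hu_cont.continuousWithinAt hcmem
    have t2 : Filter.Tendsto v (𝓝[Set.Icc (0:ℝ) T] c) (𝓝 y) :=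
      hv_cont.continuousWithinAt hcmem
    have e1 : ∀ᶠ x in 𝓝[Set.Icc (0:ℝ) T] c, u x ∈ Metric.ball (u c) ε :=
      t1 (Metric.ball_mem_nhds _ hε)
    have e2 : ∀ᶠ x in 𝓝[Set.Icc (0:ℝ) T] c, v x ∈ Metric.ball y ε :=
      t2 (Metric.ball_mem_nhds _ hε)
    obtain ⟨δ₁, hδ₁, hδball⟩ := Metric.mem_nhdsWithin_iff.mp (e1.and e2)
    set d0 : ℝ := (γ * Real.Gamma γ / ((K:ℝ) + 1)) ^ (1/γ : ℝ) with hd0def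
    have hd0pos : 0 < d0 := Real.rpow_pos_of_pos (by positivity) _
    set δ : ℝ := min (min (δ₁/2) ((T - c)/2)) d0 with hδdef
    have hδpos : 0 < δ := lt_min (lt_min (by linarith) (by linarith)) hd0pos
    have hδd1 : δ < δ₁ := lt_of_le_of_lt ((min_le_left _ _).trans (min_le_left _ _)) (by linarith)
    have hδT : c + δ ≤ T := by
      have h1 : δ ≤ (T - c)/2 :=
        le_trans (min_le_left (min (δ₁/2) ((T - c)/2)) d0)
          (min_le_right (δ₁/2) ((T - c)/2))
      linarith
    have hδd0 : δ ≤ d0 := min_le_right _ _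
    have hKδ : (K:ℝ) * δ ^ γ < γ * Real.Gamma γ := by
      have h1 : δ ^ γ ≤ d0 ^ γ := Real.rpow_le_rpow hδpos.le hδd0 hγ0.le
      have h2 : d0 ^ γ = γ * Real.Gamma γ / ((K:ℝ) + 1) := by
        rw [hd0def, ← Real.rpow_mul (by positivity), one_div,
          inv_mul_cancel₀ (ne_of_gt hγ0), Real.rpow_one]
      have hK0 : (0:ℝ) ≤ (K:ℝ) := K.2
      have h3 : (K:ℝ) * (γ * Real.Gamma γ / ((K:ℝ) + 1)) < γ * Real.Gamma γ := by
        rw [mul_div_assoc', div_lt_iff₀ (by positivity)]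
        nlinarith [mul_pos hγ0 hΓ]
      calc (K:ℝ) * δ ^ γ ≤ (K:ℝ) * d0 ^ γ := by nlinarith
        _ < γ * Real.Gamma γ := by rw [h2]; exact h3
    -- key: u ≤ v on [c, c+δ]
    have hsub2 : Set.Icc c (c+δ) ⊆ Set.Icc (0:ℝ) T :=
      fun x hx => ⟨hc0.trans hx.1, hx.2.trans hδT⟩
    have hkey : ∀ x ∈ Set.Icc c (c+δ), u x ≤ v x := by
      have hgc : ContinuousOn (fun x => u x - v x) (Set.Icc c (c+δ)) :=
        (hu_cont.mono hsub2).sub (hv_cont.mono hsub2)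
      obtain ⟨t₀, ht₀, hmax⟩ := isCompact_Icc.exists_isMaxOn
        (Set.nonempty_Icc.mpr (by linarith)) hgc
      intro x hx
      have hle : u x - v x ≤ u t₀ - v t₀ := hmax hx
      suffices hsuff : u t₀ - v t₀ ≤ 0 by linarith
      by_contra hMpos
      push_neg at hMpos
      set M := u t₀ - v t₀ with hMdef
      have ht₀T : t₀ ∈ Set.Icc (0:ℝ) T := hsub2 ht₀
      have ht₀0 : (0:ℝ) ≤ t₀ := ht₀T.1
      have hct₀ : c ≤ t₀ := ht₀.1
      have hsub3 : Set.Icc (0:ℝ) t₀ ⊆ Set.Icc (0:ℝ) T :=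
        fun x hx => ⟨hx.1, hx.2.trans ht₀T.2⟩
      have hfu_cont : ContinuousOn (fun s => f (u s)) (Set.Icc (0:ℝ) t₀) :=
        hfc.comp (hu_cont.mono hsub3) (fun s hs => hu_nn s (hsub3 hs))
      have hfv_cont : ContinuousOn (fun s => f (v s)) (Set.Icc (0:ℝ) t₀) :=
        hfc.comp (hv_cont.mono hsub3) (fun s hs => hv_nn s (hsub3 hs))
      have Iu : IntervalIntegrable (fun s => (t₀ - s) ^ (γ-1) * f (u s)) volume 0 t₀ :=
        ker_mul_intble hγ0 t₀ (by rw [Set.uIcc_of_le ht₀0]; exact hfu_cont)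
      have Iv : IntervalIntegrable (fun s => (t₀ - s) ^ (γ-1) * f (v s)) volume 0 t₀ :=
        ker_mul_intble hγ0 t₀ (by rw [Set.uIcc_of_le ht₀0]; exact hfv_cont)
      set G : ℝ → ℝ := fun s => (t₀ - s) ^ (γ-1) * f (u s) - (t₀ - s) ^ (γ-1) * f (v s)
        with hGdef
      have IG : IntervalIntegrable G volume 0 t₀ := Iu.sub Iv
      have IG1 : IntervalIntegrable G volume 0 c :=
        IG.mono_set (by
          rw [Set.uIcc_of_le hc0, Set.uIcc_of_le ht₀0]
          exact Set.Icc_subset_Icc le_rfl hct₀)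
      have IG2 : IntervalIntegrable G volume c t₀ :=
        IG.mono_set (by
          rw [Set.uIcc_of_le hct₀, Set.uIcc_of_le ht₀0]
          exact Set.Icc_subset_Icc hc0 le_rfl)
      have hineq : M ≤ (1 / Real.Gamma γ) * ∫ s in (0:ℝ)..t₀, G s := by
        have h1 := hu_eq t₀ ht₀T
        have h2 := hv_ge t₀ ht₀T
        have h3 : (∫ s in (0:ℝ)..t₀, G s) =
            (∫ s in (0:ℝ)..t₀, (t₀ - s) ^ (γ-1) * f (u s)) -
            ∫ s in (0:ℝ)..t₀, (t₀ - s) ^ (γ-1) * f (v s) :=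
          intervalIntegral.integral_sub Iu Iv
        rw [h3, mul_sub]
        rw [hMdef, h1]
        linarith
      have hsplit : (∫ s in (0:ℝ)..t₀, G s) =
          (∫ s in (0:ℝ)..c, G s) + ∫ s in c..t₀, G s :=
        (intervalIntegral.integral_add_adjacent_intervals IG1 IG2).symm
      have hI1 : (∫ s in (0:ℝ)..c, G s) ≤ 0 := by
        have h0 : (∫ s in (0:ℝ)..c, G s) ≤ ∫ s in (0:ℝ)..c, (0:ℝ) := by
          apply intervalIntegral.integral_mono_on hc0 IG1 intervalIntegrable_const
          intro s hs
          have hsT : s ∈ Set.Icc (0:ℝ) T := ⟨hs.1, hs.2.trans hcT⟩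
          have hker : 0 ≤ (t₀ - s) ^ (γ-1) :=
            Real.rpow_nonneg (by linarith [hs.2]) _
          have hfle : f (u s) ≤ f (v s) := hfmono (hu_nn s hsT) (hv_nn s hsT) (hP s hs)
          have : (t₀ - s) ^ (γ-1) * f (u s) ≤ (t₀ - s) ^ (γ-1) * f (v s) :=
            mul_le_mul_of_nonneg_left hfle hker
          simp only [hGdef]
          linarith
        simpa using h0
      have hI2 : (∫ s in c..t₀, G s) ≤ (K:ℝ) * M * (t₀ - c) ^ γ / γ := by
        have hmon : (∫ s in c..t₀, G s) ≤
            ∫ s in c..t₀, (t₀ - s) ^ (γ-1) * ((K:ℝ) * M) := by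
          apply intervalIntegral.integral_mono_on hct₀ IG2
            ((ker_intble hγ0 t₀ c t₀).mul_const _)
          intro s hs
          have hsT : s ∈ Set.Icc (0:ℝ) T := ⟨hc0.trans hs.1, hs.2.trans ht₀T.2⟩
          have hker : 0 ≤ (t₀ - s) ^ (γ-1) :=
            Real.rpow_nonneg (by linarith [hs.2]) _
          have hsδ : s ∈ Set.Icc c (c+δ) := ⟨hs.1, hs.2.trans ht₀.2⟩
          have hfs : f (u s) - f (v s) ≤ (K:ℝ) * M := by
            have hKM : (0:ℝ) ≤ (K:ℝ) * M := mul_nonneg K.2 hMpos.le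
            rcases le_or_gt (u s) (v s) with hcase | hcase
            · have := hfmono (hu_nn s hsT) (hv_nn s hsT) hcase
              linarith
            · have hsball : s ∈ Metric.ball c δ₁ ∩ Set.Icc (0:ℝ) T := by
                constructor
                · rw [Metric.mem_ball, Real.dist_eq, abs_of_nonneg (by linarith [hs.1])]
                  linarith [hs.2, ht₀.2]
                · exact hsT
              obtain ⟨hus, hvs⟩ := hδball hsball
              rw [Metric.mem_ball, Real.dist_eq] at hus hvs
              have hus' : |u s - y| < ε := by
                rw [abs_lt] at hus hvs ⊢
                constructor
                · linarith
                · linarith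
              have humem : u s ∈ sy := hball ⟨by rwa [Metric.mem_ball, Real.dist_eq],
                hu_nn s hsT⟩
              have hvmem : v s ∈ sy := hball ⟨by rwa [Metric.mem_ball, Real.dist_eq],
                hv_nn s hsT⟩
              have hd := hK.dist_le_mul (u s) humem (v s) hvmem
              rw [Real.dist_eq, Real.dist_eq] at hd
              have husvs : u s - v s ≤ M := hmax hsδ
              calc f (u s) - f (v s) ≤ |f (u s) - f (v s)| := le_abs_self _
                _ ≤ (K:ℝ) * |u s - v s| := hd
                _ = (K:ℝ) * (u s - v s) := by rw [abs_of_pos (by linarith)]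
                _ ≤ (K:ℝ) * M := mul_le_mul_of_nonneg_left husvs K.2
          calc G s = (t₀ - s) ^ (γ-1) * (f (u s) - f (v s)) := by
                rw [hGdef]; ring
            _ ≤ (t₀ - s) ^ (γ-1) * ((K:ℝ) * M) := mul_le_mul_of_nonneg_left hfs hker
        rw [intervalIntegral.integral_mul_const, ker_integral hγ0 le_rfl,
          sub_self, Real.zero_rpow (ne_of_gt hγ0), sub_zero] at hmon
        calc (∫ s in c..t₀, G s) ≤ (t₀ - c) ^ γ / γ * ((K:ℝ) * M) := hmon
          _ = (K:ℝ) * M * (t₀ - c) ^ γ / γ := by ring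
      have hfinal : M ≤ (K:ℝ) * M * δ ^ γ / (γ * Real.Gamma γ) := by
        have h6 : (t₀ - c) ^ γ ≤ δ ^ γ :=
          Real.rpow_le_rpow (by linarith [ht₀.1]) (by linarith [ht₀.2]) hγ0.le
        have hKM : (0:ℝ) ≤ (K:ℝ) * M := mul_nonneg K.2 hMpos.le
        have step : M ≤ (1 / Real.Gamma γ) * ((K:ℝ) * M * (t₀ - c) ^ γ / γ) := by
          calc M ≤ (1 / Real.Gamma γ) * ∫ s in (0:ℝ)..t₀, G s := hineq
            _ = (1 / Real.Gamma γ) * ((∫ s in (0:ℝ)..c, G s) + ∫ s in c..t₀, G s) := by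
                rw [hsplit]
            _ ≤ (1 / Real.Gamma γ) * ((K:ℝ) * M * (t₀ - c) ^ γ / γ) := by
                apply mul_le_mul_of_nonneg_left _ (by positivity)
                linarith
        calc M ≤ (1 / Real.Gamma γ) * ((K:ℝ) * M * (t₀ - c) ^ γ / γ) := step
          _ ≤ (1 / Real.Gamma γ) * ((K:ℝ) * M * δ ^ γ / γ) := by
              apply mul_le_mul_of_nonneg_left _ (by positivity)
              exact div_le_div_of_nonneg_right (mul_le_mul_of_nonneg_left h6 hKM) hγ0.le
          _ = (K:ℝ) * M * δ ^ γ / (γ * Real.Gamma γ) := by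
              rw [one_div, inv_mul_eq_div, div_div]
      have : (K:ℝ) * M * δ ^ γ / (γ * Real.Gamma γ) < M := by
        rw [div_lt_iff₀ (by positivity)]
        nlinarith [Real.rpow_nonneg hδpos.le γ, mul_pos hγ0 hΓ]
      linarith
    have hcdS : c + δ ∈ S := by
      refine ⟨⟨by linarith, hδT⟩, fun s hs => ?_⟩
      rcases le_total s c with h | h
      · exact hP s ⟨hs.1, h⟩
      · exact hkey s ⟨h, hs.2⟩
    have := le_csSup hSbdd hcdS
    linarith
  intro t ht
  exact hP t ⟨ht.1, by rw [hceq]; exact ht.2⟩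

/-- Solutions with nonnegative monotone `f` are nondecreasing. -/
lemma sol_mono {γ : ℝ} (hγ0 : 0 < γ) {f : ℝ → ℝ}
    (hfpos : ∀ x ∈ Set.Ici (0:ℝ), 0 ≤ f x)
    (hfmono : MonotoneOn f (Set.Ici 0))
    (hflip : ∀ x ∈ Set.Ici (0:ℝ), ∃ K : NNReal, ∃ s ∈ 𝓝[Set.Ici (0:ℝ)] x,
      LipschitzOnWith K f s)
    {u₀ : ℝ} {u : ℝ → ℝ} {Tb : ℝ≥0∞}
    (hu : IsSolUpTo γ f (Set.Ici 0) u₀ u Tb) :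
    ∀ t₁ t₂ : ℝ, 0 ≤ t₁ → t₁ ≤ t₂ → ENNReal.ofReal t₂ < Tb → u t₁ ≤ u t₂ := by
  obtain ⟨hu0, hcont, hmem, heq⟩ := hu
  intro t₁ t₂ ht₁ h12 ht₂
  have hΓ : 0 < Real.Gamma γ := Real.Gamma_pos_of_pos hγ0
  set h : ℝ := t₂ - t₁ with hhdef
  have hh0 : 0 ≤ h := by simp [hhdef]; linarith
  have hdom : ∀ t : ℝ, 0 ≤ t → t ≤ t₂ → ENNReal.ofReal t < Tb := fun t h0 hle =>
    lt_of_le_of_lt (ENNReal.ofReal_le_ofReal hle) ht₂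
  have hDsub : Set.Icc (0:ℝ) t₂ ⊆ {t : ℝ | 0 ≤ t ∧ ENNReal.ofReal t < Tb} :=
    fun t ht => ⟨ht.1, hdom t ht.1 ht.2⟩
  have hucont2 : ContinuousOn u (Set.Icc 0 t₂) := hcont.mono hDsub
  have hfc : ContinuousOn f (Set.Ici 0) := f_contOn hflip
  have hIsub : Set.Icc (0:ℝ) t₁ ⊆ Set.Icc (0:ℝ) t₂ := Set.Icc_subset_Icc le_rfl h12
  have hmaps : ∀ t ∈ Set.Icc (0:ℝ) t₁, t + h ∈ Set.Icc (0:ℝ) t₂ := by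
    intro t ht
    constructor
    · linarith [ht.1]
    · simp only [hhdef]; linarith [ht.2]
  have hv_cont : ContinuousOn (fun t => u (t + h)) (Set.Icc 0 t₁) := by
    apply hucont2.comp (by fun_prop) hmaps
  have hv_ge : ∀ t ∈ Set.Icc (0:ℝ) t₁,
      u₀ + (1 / Real.Gamma γ) *
        ∫ s in (0:ℝ)..t, (t - s) ^ (γ - 1) * f (u (s + h)) ≤ u (t + h) := by
    intro t ht
    have hth0 : (0:ℝ) ≤ t + h := by linarith [ht.1, hh0]
    have hth2 : t + h ≤ t₂ := (hmaps t ht).2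
    have heqth := heq (t + h) hth0 (hdom _ hth0 hth2)
    have hfu : ContinuousOn (fun s => f (u s)) (Set.Icc (0:ℝ) (t+h)) :=
      hfc.comp (hucont2.mono (Set.Icc_subset_Icc le_rfl hth2))
        (fun s hs => hmem s hs.1 (hdom s hs.1 (hs.2.trans hth2)))
    have I0 : IntervalIntegrable (fun s => (t+h-s) ^ (γ-1) * f (u s)) volume 0 (t+h) :=
      ker_mul_intble hγ0 _ (by rw [Set.uIcc_of_le hth0]; exact hfu)
    have hht : h ≤ t + h := by linarith [ht.1]
    have I1 : IntervalIntegrable (fun s => (t+h-s) ^ (γ-1) * f (u s)) volume 0 h :=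
      I0.mono_set (by
        rw [Set.uIcc_of_le hh0, Set.uIcc_of_le hth0]
        exact Set.Icc_subset_Icc le_rfl hht)
    have I2 : IntervalIntegrable (fun s => (t+h-s) ^ (γ-1) * f (u s)) volume h (t+h) :=
      I0.mono_set (by
        rw [Set.uIcc_of_le hht, Set.uIcc_of_le hth0]
        exact Set.Icc_subset_Icc hh0 le_rfl)
    have hsplit : (∫ s in (0:ℝ)..h, (t+h-s) ^ (γ-1) * f (u s)) +
        (∫ s in h..(t+h), (t+h-s) ^ (γ-1) * f (u s)) =
        ∫ s in (0:ℝ)..(t+h), (t+h-s) ^ (γ-1) * f (u s) :=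
      intervalIntegral.integral_add_adjacent_intervals I1 I2
    have hpos1 : 0 ≤ ∫ s in (0:ℝ)..h, (t+h-s) ^ (γ-1) * f (u s) := by
      apply intervalIntegral.integral_nonneg hh0
      intro s hs
      have hs2 : s ≤ t₂ := by linarith [hs.2, ht.1, hh0]
      exact mul_nonneg (Real.rpow_nonneg (by linarith [hs.2, ht.1]) _)
        (hfpos _ (hmem s hs.1 (hdom s hs.1 hs2)))
    have hshift : (∫ s in h..(t+h), (t+h-s) ^ (γ-1) * f (u s)) =
        ∫ s in (0:ℝ)..t, (t-s) ^ (γ-1) * f (u (s + h)) := by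
      have hc := intervalIntegral.integral_comp_add_right (a := 0) (b := t)
        (fun s => (t+h-s) ^ (γ-1) * f (u s)) h
      rw [zero_add] at hc
      rw [← hc]
      apply intervalIntegral.integral_congr
      intro s _
      simp only [add_sub_add_right_eq_sub]
    rw [heqth, ← hsplit, hshift]
    have hΓ' : 0 ≤ (1 / Real.Gamma γ) := by positivity
    nlinarith [mul_nonneg hΓ' hpos1]
  have hu_nn : ∀ t ∈ Set.Icc (0:ℝ) t₁, 0 ≤ u t :=
    fun t ht => hmem t ht.1 (hdom t ht.1 (ht.2.trans h12))
  have hv_nn : ∀ t ∈ Set.Icc (0:ℝ) t₁, 0 ≤ u (t + h) :=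
    fun t ht => hmem _ (hmaps t ht).1 (hdom _ (hmaps t ht).1 (hmaps t ht).2)
  have hu_eq : ∀ t ∈ Set.Icc (0:ℝ) t₁,
      u t = u₀ + (1 / Real.Gamma γ) * ∫ s in (0:ℝ)..t, (t - s) ^ (γ - 1) * f (u s) :=
    fun t ht => heq t ht.1 (hdom t ht.1 (ht.2.trans h12))
  have key := comparison hγ0 hfmono hflip ht₁ (hucont2.mono hIsub) hv_cont
    hu_nn hv_nn hu_eq hv_ge
  have := key t₁ ⟨ht₁, le_rfl⟩
  simpa [hhdef] using this

/-- discrete Grönwall inequality for the two explicit discretizations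
of the Volterra integral equation. -/
theorem stmt17 (γ k u₀ : ℝ) (f : ℝ → ℝ) (u : ℝ → ℝ) (N : ℕ) (w : ℕ → ℝ)
    (hγ : γ ∈ Set.Ioo (0:ℝ) 1) (hk : 0 < k)
    (hfpos : ∀ x ∈ Set.Ici (0:ℝ), 0 ≤ f x)
    (hfmono : MonotoneOn f (Set.Ici 0))
    (hflip : ∀ x ∈ Set.Ici (0:ℝ), ∃ K : NNReal, ∃ s ∈ 𝓝[Set.Ici (0:ℝ)] x, LipschitzOnWith K f s)
    (hu₀ : 0 < u₀)
    (hu : IsSolUpTo γ f (Set.Ici 0) u₀ u (maxTime γ f (Set.Ici 0) u₀))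
    (hwpos : ∀ n ≤ N, 0 ≤ w n)
    (hrec :
      (∀ n ≤ N, w n ≤ u₀ + k ^ γ / Real.Gamma (1 + γ) *
        ∑ m ∈ Finset.range n, f (w m) * (((n : ℝ) - m) ^ γ - ((n : ℝ) - m - 1) ^ γ)) ∨
      (∀ n ≤ N, w n ≤ u₀ + k ^ γ / Real.Gamma γ *
        ∑ m ∈ Finset.range n, f (w m) * ((n : ℝ) - m) ^ (γ - 1))) :
    ∀ n ≤ N, ENNReal.ofReal (n * k) < maxTime γ f (Set.Ici 0) u₀ →
      w n ≤ u (n * k) := by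
  obtain ⟨hγ0, hγ1⟩ := hγ
  set Tb := maxTime γ f (Set.Ici 0) u₀ with hTbdef
  have hΓ : 0 < Real.Gamma γ := Real.Gamma_pos_of_pos hγ0
  have hΓ1 : Real.Gamma (1 + γ) = γ * Real.Gamma γ := by
    rw [add_comm]; exact Real.Gamma_add_one (ne_of_gt hγ0)
  have hfc : ContinuousOn f (Set.Ici 0) := f_contOn hflip
  have hmono : ∀ t₁ t₂ : ℝ, 0 ≤ t₁ → t₁ ≤ t₂ → ENNReal.ofReal t₂ < Tb → u t₁ ≤ u t₂ :=
    sol_mono hγ0 hfpos hfmono hflip hu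
  obtain ⟨hu0, hucont, humem, hueq⟩ := hu
  intro n
  induction n using Nat.strong_induction_on with
  | _ n ih =>
    intro hnN hnk
    set t : ℝ := (n:ℝ) * k with htdef
    have ht0 : 0 ≤ t := by positivity
    have hdom : ∀ s : ℝ, 0 ≤ s → s ≤ t → ENNReal.ofReal s < Tb := fun s h0 hle =>
      lt_of_le_of_lt (ENNReal.ofReal_le_ofReal hle) hnk
    -- continuity of f ∘ u on [0, t]
    have hDsub : Set.Icc (0:ℝ) t ⊆ {s : ℝ | 0 ≤ s ∧ ENNReal.ofReal s < Tb} :=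
      fun s hs => ⟨hs.1, hdom s hs.1 hs.2⟩
    have hucont2 : ContinuousOn u (Set.Icc 0 t) := hucont.mono hDsub
    have hfu_cont : ContinuousOn (fun s => f (u s)) (Set.Icc (0:ℝ) t) :=
      hfc.comp hucont2 (fun s hs => humem s hs.1 (hdom s hs.1 hs.2))
    set F : ℝ → ℝ := fun s => (t - s) ^ (γ - 1) * f (u s) with hFdef
    set a : ℕ → ℝ := fun m => (m:ℝ) * k with hadef
    have ham : ∀ m : ℕ, m ≤ n → a m ≤ t := by
      intro m hm
      have : (m:ℝ) ≤ (n:ℝ) := Nat.cast_le.mpr hm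
      simp only [hadef, htdef]
      nlinarith
    have ham0 : ∀ m : ℕ, 0 ≤ a m := fun m => by positivity
    have hIm : ∀ m : ℕ, m < n → IntervalIntegrable F volume (a m) (a (m+1)) := by
      intro m hm
      apply ker_mul_intble hγ0
      rw [Set.uIcc_of_le (by simp only [hadef]; push_cast; nlinarith)]
      apply hfu_cont.mono
      exact Set.Icc_subset_Icc (ham0 m) (ham (m+1) hm)
    have hsum : ∑ m ∈ Finset.range n, ∫ s in (a m)..(a (m+1)), F s =
        ∫ s in (0:ℝ)..t, F s := by
      have := intervalIntegral.sum_integral_adjacent_intervals (μ := volume)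
        (a := a) (f := F) hIm
      simpa [hadef, htdef] using this
    have hut : u t = u₀ + (1 / Real.Gamma γ) * ∫ s in (0:ℝ)..t, F s :=
      hueq t ht0 hnk
    -- per-term facts
    have hterm : ∀ m : ℕ, m < n →
        (f (w m) ≤ f (u (a m)) ∧ 0 ≤ f (u (a m)) ∧
         ∀ s ∈ Set.Icc (a m) (a (m+1)), u (a m) ≤ u s ∧ 0 ≤ u s ∧ s ≤ t) := by
      intro m hm
      have hmN : m ≤ N := le_trans (le_of_lt hm) hnN
      have hamt : a m ≤ t := ham m (le_of_lt hm)
      have hm1t : a (m+1) ≤ t := ham (m+1) hm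
      have hmTb : ENNReal.ofReal (a m) < Tb := hdom _ (ham0 m) hamt
      have hwm : w m ≤ u (a m) := by
        have := ih m hm hmN
        simpa [hadef] using this hmTb
      have humk : (0:ℝ) ≤ u (a m) := humem _ (ham0 m) hmTb
      refine ⟨hfmono (hwpos m hmN) humk hwm, hfpos _ humk, ?_⟩
      intro s hs
      have hs0 : (0:ℝ) ≤ s := le_trans (ham0 m) hs.1
      have hst : s ≤ t := hs.2.trans hm1t
      have hsTb : ENNReal.ofReal s < Tb := hdom s hs0 hst
      exact ⟨hmono (a m) s (ham0 m) hs.1 hsTb, humem s hs0 hsTb, hst⟩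
    rcases hrec with hrec | hrec
    · -- first scheme
      have hterm1 : ∀ m ∈ Finset.range n,
          k ^ γ / Real.Gamma (1 + γ) *
            (f (w m) * (((n:ℝ) - m) ^ γ - ((n:ℝ) - m - 1) ^ γ)) ≤
          (1 / Real.Gamma γ) * ∫ s in (a m)..(a (m+1)), F s := by
        intro m hm'
        have hm : m < n := Finset.mem_range.mp hm'
        obtain ⟨hfw, hfnn, hsfacts⟩ := hterm m hm
        have hm1n : (m:ℝ) + 1 ≤ (n:ℝ) := by exact_mod_cast Nat.succ_le_of_lt hm
        have hA : 0 ≤ ((n:ℝ) - m) ^ γ - ((n:ℝ) - m - 1) ^ γ :=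
          sub_nonneg.mpr (Real.rpow_le_rpow (by linarith) (by linarith) hγ0.le)
        have haa : a m ≤ a (m+1) := by
          simp only [hadef]; push_cast; nlinarith
        -- ∫ kernel over the subinterval
        have hker_eq : (∫ s in (a m)..(a (m+1)), (t - s) ^ (γ - 1)) =
            (((n:ℝ) - m) ^ γ * k ^ γ - ((n:ℝ) - m - 1) ^ γ * k ^ γ) / γ := by
          rw [ker_integral hγ0 (ham (m+1) hm)]
          have e1 : t - a m = ((n:ℝ) - m) * k := by
            simp only [hadef, htdef]; ring
          have e2 : t - a (m+1) = ((n:ℝ) - m - 1) * k := by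
            simp only [hadef, htdef]; push_cast; ring
          rw [e1, e2, Real.mul_rpow (by linarith) hk.le,
            Real.mul_rpow (by linarith) hk.le]
        have hconst_le : (∫ s in (a m)..(a (m+1)), (t - s) ^ (γ - 1)) * f (u (a m)) ≤
            ∫ s in (a m)..(a (m+1)), F s := by
          rw [← intervalIntegral.integral_mul_const]
          apply intervalIntegral.integral_mono_on haa
            ((ker_intble hγ0 t _ _).mul_const _) (hIm m hm)
          intro s hs
          obtain ⟨hules, hunn, hst⟩ := hsfacts s hs
          have hker : 0 ≤ (t - s) ^ (γ - 1) := Real.rpow_nonneg (by linarith) _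
          have humk : (0:ℝ) ≤ u (a m) := by
            have := hsfacts (a m) ⟨le_rfl, haa⟩
            exact this.2.1
          exact mul_le_mul_of_nonneg_left (hfmono humk hunn hules) hker
        calc k ^ γ / Real.Gamma (1 + γ) *
              (f (w m) * (((n:ℝ) - m) ^ γ - ((n:ℝ) - m - 1) ^ γ))
            ≤ k ^ γ / Real.Gamma (1 + γ) *
              (f (u (a m)) * (((n:ℝ) - m) ^ γ - ((n:ℝ) - m - 1) ^ γ)) := by
              apply mul_le_mul_of_nonneg_left _ (by positivity)
              exact mul_le_mul_of_nonneg_right hfw hA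
          _ = (1 / Real.Gamma γ) *
              ((∫ s in (a m)..(a (m+1)), (t - s) ^ (γ - 1)) * f (u (a m))) := by
              rw [hker_eq, hΓ1]
              field_simp
          _ ≤ (1 / Real.Gamma γ) * ∫ s in (a m)..(a (m+1)), F s :=
              mul_le_mul_of_nonneg_left hconst_le (by positivity)
      have hchain : k ^ γ / Real.Gamma (1 + γ) *
          ∑ m ∈ Finset.range n, f (w m) * (((n:ℝ) - m) ^ γ - ((n:ℝ) - m - 1) ^ γ) ≤
          (1 / Real.Gamma γ) * ∫ s in (0:ℝ)..t, F s := by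
        rw [← hsum, Finset.mul_sum, Finset.mul_sum]
        exact Finset.sum_le_sum hterm1
      have := hrec n hnN
      rw [hut]
      calc w n ≤ u₀ + k ^ γ / Real.Gamma (1 + γ) *
            ∑ m ∈ Finset.range n, f (w m) * (((n:ℝ) - m) ^ γ - ((n:ℝ) - m - 1) ^ γ) := this
        _ ≤ u₀ + (1 / Real.Gamma γ) * ∫ s in (0:ℝ)..t, F s := by linarith
    · -- second scheme
      have hterm2 : ∀ m ∈ Finset.range n,
          k ^ γ / Real.Gamma γ * (f (w m) * ((n:ℝ) - m) ^ (γ - 1)) ≤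
          (1 / Real.Gamma γ) * ∫ s in (a m)..(a (m+1)), F s := by
        intro m hm'
        have hm : m < n := Finset.mem_range.mp hm'
        obtain ⟨hfw, hfnn, hsfacts⟩ := hterm m hm
        have hm1n : (m:ℝ) + 1 ≤ (n:ℝ) := by exact_mod_cast Nat.succ_le_of_lt hm
        have haa : a m ≤ a (m+1) := by
          simp only [hadef]; push_cast; nlinarith
        have humk : (0:ℝ) ≤ u (a m) := (hsfacts (a m) ⟨le_rfl, haa⟩).2.1
        have htam : 0 < t - a m := by
          simp only [hadef, htdef]
          nlinarith
        have hBnn : 0 ≤ ((n:ℝ) - m) ^ (γ - 1) := Real.rpow_nonneg (by linarith) _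
        -- the constant lower integrand vs F, a.e. on [a m, a (m+1)]
        have hconst_le : (∫ s in (a m)..(a (m+1)),
            (t - a m) ^ (γ - 1) * f (u (a m))) ≤
            ∫ s in (a m)..(a (m+1)), F s := by
          apply intervalIntegral.integral_mono_ae_restrict haa
            intervalIntegrable_const (hIm m hm)
          have h1 : ∀ᵐ s ∂(volume.restrict (Set.Icc (a m) (a (m+1)))),
              s ∈ Set.Icc (a m) (a (m+1)) := ae_restrict_mem measurableSet_Icc
          have h2 : ∀ᵐ s : ℝ, s ≠ t := by
            rw [ae_iff]
            have he : {s : ℝ | ¬ s ≠ t} = {t} := by ext s; simp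
            rw [he]
            exact Real.volume_singleton
          have h2' : ∀ᵐ s ∂(volume.restrict (Set.Icc (a m) (a (m+1)))), s ≠ t :=
            h2.filter_mono (ae_mono Measure.restrict_le_self)
          filter_upwards [h1, h2'] with s hs hst
          obtain ⟨hules, hunn, hst'⟩ := hsfacts s hs
          have hslt : s < t := lt_of_le_of_ne hst' hst
          have hker : (t - a m) ^ (γ - 1) ≤ (t - s) ^ (γ - 1) := by
            apply antitoneOn_rpow_Ioi_of_exponent_nonpos (by linarith)
              (Set.mem_Ioi.mpr (by linarith)) (Set.mem_Ioi.mpr htam)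
            linarith [hs.1]
          have : (t - a m) ^ (γ - 1) * f (u (a m)) ≤ (t - s) ^ (γ - 1) * f (u s) := by
            apply mul_le_mul hker (hfmono humk hunn hules) (hfpos _ humk)
            exact Real.rpow_nonneg (by linarith) _
          exact this
        have hconst_val : (∫ s in (a m)..(a (m+1)),
            (t - a m) ^ (γ - 1) * f (u (a m))) =
            k * (t - a m) ^ (γ - 1) * f (u (a m)) := by
          rw [intervalIntegral.integral_const]
          have : a (m+1) - a m = k := by simp only [hadef]; push_cast; ring
          rw [this]
          simp [smul_eq_mul]
          ring
        have hkernel_id : k ^ γ * ((n:ℝ) - m) ^ (γ - 1) = k * (t - a m) ^ (γ - 1) := by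
          have e1 : t - a m = ((n:ℝ) - m) * k := by simp only [hadef, htdef]; ring
          rw [e1, Real.mul_rpow (by linarith) hk.le,
            Real.rpow_sub_one (ne_of_gt hk)]
          field_simp
        calc k ^ γ / Real.Gamma γ * (f (w m) * ((n:ℝ) - m) ^ (γ - 1))
            ≤ k ^ γ / Real.Gamma γ * (f (u (a m)) * ((n:ℝ) - m) ^ (γ - 1)) := by
              apply mul_le_mul_of_nonneg_left _ (by positivity)
              exact mul_le_mul_of_nonneg_right hfw hBnn
          _ = (1 / Real.Gamma γ) * (k * (t - a m) ^ (γ - 1) * f (u (a m))) := by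
              rw [← hkernel_id]; field_simp
          _ = (1 / Real.Gamma γ) * ∫ s in (a m)..(a (m+1)),
                (t - a m) ^ (γ - 1) * f (u (a m)) := by rw [hconst_val]
          _ ≤ (1 / Real.Gamma γ) * ∫ s in (a m)..(a (m+1)), F s :=
              mul_le_mul_of_nonneg_left hconst_le (by positivity)
      have hchain : k ^ γ / Real.Gamma γ *
          ∑ m ∈ Finset.range n, f (w m) * ((n:ℝ) - m) ^ (γ - 1) ≤
          (1 / Real.Gamma γ) * ∫ s in (0:ℝ)..t, F s := by
        rw [← hsum, Finset.mul_sum, Finset.mul_sum]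
        exact Finset.sum_le_sum hterm2
      have := hrec n hnN
      rw [hut]
      calc w n ≤ u₀ + k ^ γ / Real.Gamma γ *
            ∑ m ∈ Finset.range n, f (w m) * ((n:ℝ) - m) ^ (γ - 1) := this
        _ ≤ u₀ + (1 / Real.Gamma γ) * ∫ s in (0:ℝ)..t, F s := by linarith
end

section
/- (Dixon's discrete fractional Grönwall inequality.) Let γ ∈ (0,1), k > 0, B > 0, λ > 0, and let (aₙ)_{0≤n≤N} be a sequence of nonnegative reals satisfying aₙ ≤ B + (λ/Γ(γ)) k^γ ∑_{m=0}^{n−1} (n−m)^{γ−1} aₘ for all 0 ≤ n ≤ N. Then aₙ ≤ B · E_γ(λ (nk)^γ) for all 0 ≤ n ≤ N, where E_γ(z) = ∑_{j=0}^{∞} z^j / Γ(jγ + 1) is the Mittag-Leffler function. -/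
/-!
Picard iteration: feeding the inequality into itself `J` times bounds `a n` by
`B ∑_{j<J} c_j(n) + M c_J(n)`, where `c_j(n) = (λ (nk)^γ)^j / Γ(jγ+1)` and `M` bounds `a` on
`[0, N]`. Each round turns `c_j` into (at most) `c_{j+1}`: for `γ ≤ 1` the integrand
`(t - s)^(γ-1) s^(jγ)` increases on `[0, t)`, so the discrete convolution is a left Riemann sum
below the Beta integral `∫₀ᵗ (t - s)^(γ-1) s^(jγ) ds = Γ(γ) Γ(jγ+1) / Γ((j+1)γ+1) · t^((j+1)γ)`.
Since `Γ(jγ+1) ≥ ⌊jγ⌋!`, the `c_j(n)` are summable in `j`, so the remainder vanishes as `J → ∞`.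
-/

open Real Filter Finset MeasureTheory
open scoped Nat Topology

theorem integral_rpow_mul_one_sub_rpow {p q : ℝ} (hp : 0 < p) (hq : 0 < q) :
    ∫ x in (0:ℝ)..1, x ^ (p - 1) * (1 - x) ^ (q - 1) = Gamma p * Gamma q / Gamma (p + q) := by
  have h : ((∫ x in (0:ℝ)..1, x ^ (p - 1) * (1 - x) ^ (q - 1) : ℝ) : ℂ) =
      Complex.betaIntegral p q := by
    rw [← intervalIntegral.integral_ofReal, Complex.betaIntegral]
    refine intervalIntegral.integral_congr fun x hx => ?_
    rw [Set.uIcc_of_le zero_le_one] at hx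
    push_cast
    rw [Complex.ofReal_cpow hx.1, Complex.ofReal_cpow (sub_nonneg.2 hx.2)]
    push_cast; rfl
  rw [Complex.betaIntegral_eq_Gamma_mul_div p q (by simpa) (by simpa), ← Complex.ofReal_add,
    Complex.Gamma_ofReal, Complex.Gamma_ofReal, Complex.Gamma_ofReal] at h
  exact_mod_cast h

theorem intervalIntegrable_sub_rpow_mul_rpow {γ δ : ℝ} (hγ : 0 < γ) (hδ : 0 ≤ δ) (t : ℝ) :
    IntervalIntegrable (fun s => (t - s) ^ (γ - 1) * s ^ δ) volume 0 t := by
  have h : IntervalIntegrable (fun s : ℝ => (t - s) ^ (γ - 1)) volume 0 t := by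
    simpa using ((intervalIntegral.intervalIntegrable_rpow' (a := 0) (b := t)
      (by linarith : -1 < γ - 1)).comp_sub_left t).symm
  exact h.mul_continuousOn (continuous_rpow_const hδ).continuousOn

theorem integral_sub_rpow_mul_rpow {γ δ t : ℝ} (hγ : 0 < γ) (hδ : -1 < δ) (ht : 0 < t) :
    ∫ s in (0:ℝ)..t, (t - s) ^ (γ - 1) * s ^ δ =
      Gamma γ * Gamma (δ + 1) / Gamma (γ + δ + 1) * t ^ (γ + δ) := by
  have hsubst := intervalIntegral.integral_comp_mul_left
    (fun s => (t - s) ^ (γ - 1) * s ^ δ) (a := 0) (b := 1) ht.ne'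
  simp only [mul_zero, mul_one, smul_eq_mul] at hsubst
  have hscale : ∫ u in (0:ℝ)..1, (t - t * u) ^ (γ - 1) * (t * u) ^ δ
      = t ^ (γ - 1) * t ^ δ * ∫ u in (0:ℝ)..1, u ^ ((δ + 1) - 1) * (1 - u) ^ (γ - 1) := by
    rw [← intervalIntegral.integral_const_mul]
    refine intervalIntegral.integral_congr fun u hu => ?_
    rw [Set.uIcc_of_le zero_le_one] at hu
    rw [show t - t * u = t * (1 - u) by ring, mul_rpow ht.le (sub_nonneg.2 hu.2),
      mul_rpow ht.le hu.1, add_sub_cancel_right]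
    ring
  rw [hscale, integral_rpow_mul_one_sub_rpow (by linarith) hγ] at hsubst
  have hpow : t ^ (γ + δ) = t * (t ^ (γ - 1) * t ^ δ) := by
    rw [show γ + δ = 1 + (γ - 1) + δ by ring, rpow_add ht, rpow_add ht, rpow_one]; ring
  rw [hpow, show γ + δ + 1 = δ + 1 + γ by ring,
    ← mul_inv_cancel_left₀ ht.ne' (∫ s in (0:ℝ)..t, (t - s) ^ (γ - 1) * s ^ δ), ← hsubst]
  ring

theorem sum_mul_le_integral_of_monotoneOn_Ico {f : ℝ → ℝ} {k : ℝ} (hk : 0 ≤ k) (n : ℕ)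
    (hf : MonotoneOn f (Set.Ico 0 (n * k))) (hint : IntervalIntegrable f volume 0 (n * k)) :
    ∑ m ∈ range n, k * f (m * k) ≤ ∫ s in (0:ℝ)..n * k, f s := by
  have hstep : ∀ m : ℕ, (m : ℝ) * k ≤ (m + 1 : ℕ) * k := fun m => by
    gcongr; simp
  have hpiece : ∀ m < n, IntervalIntegrable f volume (m * k) ((m + 1 : ℕ) * k) := by
    intro m hm
    refine hint.mono_set ?_
    rw [Set.uIcc_of_le (hstep m), Set.uIcc_of_le (by positivity)]
    exact Set.Icc_subset_Icc (by positivity) (by gcongr; exact_mod_cast hm)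
  have hsplit := intervalIntegral.sum_integral_adjacent_intervals hpiece
  rw [Nat.cast_zero, zero_mul] at hsplit
  rw [← hsplit]
  gcongr with m hm
  rw [mem_range] at hm
  calc k * f (m * k) = ∫ _ in (m * k : ℝ)..(m + 1 : ℕ) * k, f (m * k) := by
        rw [intervalIntegral.integral_const, smul_eq_mul]; push_cast; ring
    _ ≤ ∫ s in (m * k : ℝ)..(m + 1 : ℕ) * k, f s := by
        have hmn : ((m + 1 : ℕ) : ℝ) * k ≤ n * k := by gcongr; exact_mod_cast hm
        refine intervalIntegral.integral_mono_on_of_le_Ioo (hstep m) intervalIntegrable_const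
          (hpiece m hm) fun s hs => hf ⟨by positivity, hs.1.trans (hs.2.trans_le hmn)⟩
            ⟨(by positivity : (0:ℝ) ≤ m * k).trans hs.1.le, hs.2.trans_le hmn⟩ hs.1.le

theorem monotoneOn_sub_rpow_mul_rpow {γ δ t : ℝ} (hγ : γ ≤ 1) (hδ : 0 ≤ δ) :
    MonotoneOn (fun s => (t - s) ^ (γ - 1) * s ^ δ) (Set.Ico 0 t) := by
  intro x hx y hy hxy
  exact mul_le_mul (rpow_le_rpow_of_nonpos (by linarith [hy.2]) (by linarith) (by linarith))
    (rpow_le_rpow hx.1 hxy hδ) (rpow_nonneg hx.1 _) (rpow_nonneg (by linarith [hy.2]) _)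

noncomputable def mittagLefflerTerm (γ x : ℝ) (j : ℕ) : ℝ := x ^ j / Gamma (j * γ + 1)

theorem mittagLefflerTerm_nonneg {γ x : ℝ} (hγ : 0 ≤ γ) (hx : 0 ≤ x) (j : ℕ) :
    0 ≤ mittagLefflerTerm γ x j :=
  div_nonneg (pow_nonneg hx j) (Gamma_pos_of_pos (by positivity)).le

theorem mittagLefflerTerm_zero (γ x : ℝ) : mittagLefflerTerm γ x 0 = 1 := by
  simp [mittagLefflerTerm]

theorem factorial_floor_le_Gamma_add_one {y : ℝ} (hy : 1 ≤ y) : (⌊y⌋₊ ! : ℝ) ≤ Gamma (y + 1) := by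
  have h1 : (1 : ℝ) ≤ ⌊y⌋₊ := by exact_mod_cast Nat.le_floor (by simpa using hy)
  have h2 : (⌊y⌋₊ : ℝ) ≤ y := Nat.floor_le (by linarith)
  rw [← Real.Gamma_nat_eq_factorial ⌊y⌋₊]
  exact Gamma_strictMonoOn_Ici.monotoneOn (Set.mem_Ici.2 (by linarith))
    (Set.mem_Ici.2 (by linarith)) (by linarith)

theorem tendsto_pow_div_Gamma_mul_add_one {γ : ℝ} (hγ : 0 < γ) (R : ℝ) :
    Tendsto (fun j : ℕ => R ^ j / Gamma (j * γ + 1)) atTop (𝓝 0) := by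
  set K := (|R| + 1) ^ γ⁻¹
  have hR : 0 < |R| + 1 := by positivity
  have hK : 1 ≤ K := one_le_rpow (by linarith [abs_nonneg R]) (by positivity)
  have hlin : Tendsto (fun j : ℕ => (j : ℝ) * γ) atTop atTop :=
    tendsto_natCast_atTop_atTop.atTop_mul_const hγ
  have hbound : ∀ᶠ j : ℕ in atTop,
      ‖R ^ j / Gamma (j * γ + 1)‖ ≤ K * (K ^ ⌊(j : ℝ) * γ⌋₊ / (⌊(j : ℝ) * γ⌋₊ ! : ℝ)) := by
    filter_upwards [hlin.eventually_ge_atTop 1] with j hj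
    set m := ⌊(j : ℝ) * γ⌋₊
    have hΓ : 0 < Gamma (j * γ + 1) := Gamma_pos_of_pos (by positivity)
    have hKj : (|R| + 1) ^ j = K ^ ((j : ℝ) * γ) := by
      rw [← rpow_mul hR.le, mul_comm (j : ℝ), ← mul_assoc, inv_mul_cancel₀ hγ.ne', one_mul,
        rpow_natCast]
    calc ‖R ^ j / Gamma (j * γ + 1)‖ = |R| ^ j / Gamma (j * γ + 1) := by
          rw [norm_div, norm_pow, Real.norm_eq_abs, Real.norm_of_nonneg hΓ.le]
      _ ≤ (|R| + 1) ^ j / (m ! : ℝ) := by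
          gcongr
          · linarith
          · exact factorial_floor_le_Gamma_add_one hj
      _ ≤ K ^ (m + 1) / (m ! : ℝ) := by
          rw [hKj, ← rpow_natCast]
          gcongr
          push_cast; exact (Nat.lt_floor_add_one _).le
      _ = K * (K ^ m / (m ! : ℝ)) := by ring
  refine squeeze_zero_norm' hbound ?_
  simpa using ((FloorSemiring.tendsto_pow_div_factorial_atTop K).comp
    (tendsto_nat_floor_atTop.comp hlin)).const_mul K

theorem summable_mittagLefflerTerm {γ : ℝ} (hγ : 0 < γ) (x : ℝ) :
    Summable (mittagLefflerTerm γ x) := by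
  refine summable_geometric_two.of_norm_bounded_eventually_nat ?_
  filter_upwards [(tendsto_pow_div_Gamma_mul_add_one hγ (2 * x)).norm.eventually_le_const
    (by norm_num : ‖(0:ℝ)‖ < 1)] with j hj
  have hsplit : mittagLefflerTerm γ x j = (1 / 2) ^ j * ((2 * x) ^ j / Gamma (j * γ + 1)) := by
    rw [mittagLefflerTerm, mul_pow, ← mul_div_assoc, ← mul_assoc, ← mul_pow]
    norm_num
  rw [hsplit, norm_mul, norm_pow, Real.norm_of_nonneg (by norm_num : (0:ℝ) ≤ 1 / 2)]
  exact mul_le_of_le_one_right (by positivity) hj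

theorem sum_kernel_mul_mittagLefflerTerm_le {γ k lam : ℝ} (hγ : 0 < γ) (hγ1 : γ ≤ 1) (hk : 0 < k)
    (hlam : 0 ≤ lam) (j n : ℕ) :
    ∑ m ∈ range n, lam / Gamma γ * k ^ γ * ((n : ℝ) - m) ^ (γ - 1) *
        mittagLefflerTerm γ (lam * (m * k) ^ γ) j
      ≤ mittagLefflerTerm γ (lam * (n * k) ^ γ) (j + 1) := by
  rcases Nat.eq_zero_or_pos n with rfl | hn
  · simpa using mittagLefflerTerm_nonneg hγ.le (by positivity) (j + 1)
  have hpow : ∀ {x : ℝ}, 0 ≤ x → ∀ i : ℕ, (lam * x ^ γ) ^ i = lam ^ i * x ^ (i * γ) := by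
    intro x hx i
    rw [mul_pow, ← rpow_natCast (x ^ γ), ← rpow_mul hx, mul_comm γ]
  set t : ℝ := n * k
  set δ : ℝ := j * γ
  have ht : 0 < t := by positivity
  have hδ : 0 ≤ δ := by positivity
  set C := lam ^ (j + 1) / (Gamma γ * Gamma (δ + 1))
  have hterm : ∀ m ∈ range n, lam / Gamma γ * k ^ γ * ((n : ℝ) - m) ^ (γ - 1) *
      mittagLefflerTerm γ (lam * (m * k) ^ γ) j =
        C * (k * ((t - m * k) ^ (γ - 1) * (m * k) ^ δ)) := by
    intro m hm
    have hnm : (0 : ℝ) ≤ n - m := by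
      rw [sub_nonneg]; exact_mod_cast (mem_range.1 hm).le
    rw [mittagLefflerTerm, hpow (by positivity), show t - m * k = (n - m) * k by ring,
      mul_rpow hnm hk.le, show k ^ γ = k * k ^ (γ - 1) by
        rw [← rpow_one_add' hk.le (by linarith)]; ring_nf]
    simp only [C, δ]
    field_simp
    ring
  calc _ = C * ∑ m ∈ range n, k * ((t - m * k) ^ (γ - 1) * (m * k) ^ δ) := by
        rw [sum_congr rfl hterm, mul_sum]
    _ ≤ C * ∫ s in (0:ℝ)..t, (t - s) ^ (γ - 1) * s ^ δ := by
        gcongr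
        exact sum_mul_le_integral_of_monotoneOn_Ico hk.le n
          (monotoneOn_sub_rpow_mul_rpow hγ1 hδ) (intervalIntegrable_sub_rpow_mul_rpow hγ hδ t)
    _ = _ := by
        rw [integral_sub_rpow_mul_rpow hγ (by linarith) ht, mittagLefflerTerm,
          hpow ht.le, show ((j + 1 : ℕ) : ℝ) * γ = γ + δ by push_cast; ring]
        simp only [C]
        field_simp

section Picard

variable {N : ℕ} {a : ℕ → ℝ} {w c : ℕ → ℕ → ℝ} {B : ℝ}

theorem le_partial_sum_of_le_add_sum {M : ℝ} (hB : 0 ≤ B) (hM : 0 ≤ M) (haM : ∀ n ≤ N, a n ≤ M)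
    (hw : ∀ n, ∀ m < n, 0 ≤ w n m) (hrec : ∀ n ≤ N, a n ≤ B + ∑ m ∈ range n, w n m * a m)
    (hc0 : ∀ n, c 0 n = 1) (hc : ∀ j n, ∑ m ∈ range n, w n m * c j m ≤ c (j + 1) n) (J : ℕ) :
    ∀ n ≤ N, a n ≤ B * ∑ j ∈ range J, c j n + M * c J n := by
  induction J with
  | zero => simpa [hc0] using haM
  | succ J ih =>
    intro n hn
    calc a n ≤ B + ∑ m ∈ range n, w n m * (B * ∑ j ∈ range J, c j m + M * c J m) := by
          refine (hrec n hn).trans ?_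
          gcongr with m hm
          · exact hw n m (mem_range.1 hm)
          · exact ih m (by grind)
      _ = B + B * ∑ j ∈ range J, ∑ m ∈ range n, w n m * c j m
            + M * ∑ m ∈ range n, w n m * c J m := by
          simp only [mul_add, sum_add_distrib, mul_sum]
          rw [sum_comm]
          simp only [mul_left_comm, add_assoc]
      _ ≤ B + B * ∑ j ∈ range J, c (j + 1) n + M * c (J + 1) n := by
          gcongr with j
          · exact hc j n
          · exact hc J n
      _ = B * ∑ j ∈ range (J + 1), c j n + M * c (J + 1) n := by
          rw [sum_range_succ', hc0]; ring

theorem le_mul_tsum_of_le_add_sum (hB : 0 ≤ B) (hw : ∀ n, ∀ m < n, 0 ≤ w n m)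
    (hrec : ∀ n ≤ N, a n ≤ B + ∑ m ∈ range n, w n m * a m)
    (hc0 : ∀ n, c 0 n = 1) (hc : ∀ j n, ∑ m ∈ range n, w n m * c j m ≤ c (j + 1) n)
    (hsum : ∀ n, Summable fun j => c j n) :
    ∀ n ≤ N, a n ≤ B * ∑' j, c j n := by
  set M := ∑ m ∈ range (N + 1), |a m|
  have hM : 0 ≤ M := sum_nonneg fun _ _ => abs_nonneg _
  have haM : ∀ n ≤ N, a n ≤ M := fun n hn => (le_abs_self _).trans
    (single_le_sum (f := fun m => |a m|) (fun _ _ => abs_nonneg _) (mem_range.2 (by omega)))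
  intro n hn
  have hlim : Tendsto (fun J => B * ∑ j ∈ range J, c j n + M * c J n) atTop
      (𝓝 (B * ∑' j, c j n + M * 0)) :=
    ((hsum n).hasSum.tendsto_sum_nat.const_mul B).add ((hsum n).tendsto_atTop_zero.const_mul M)
  simpa using ge_of_tendsto' hlim fun J =>
    le_partial_sum_of_le_add_sum hB hM haM hw hrec hc0 hc J n hn

end Picard

theorem stmt18_general (γ k B lam : ℝ) (N : ℕ) (a : ℕ → ℝ)
    (hγ : γ ∈ Set.Ioo (0:ℝ) 1) (hk : 0 < k) (hB : 0 < B) (hlam : 0 < lam)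
    (hrec : ∀ n ≤ N, a n ≤ B + lam / Real.Gamma γ * k ^ γ *
      ∑ m ∈ Finset.range n, ((n : ℝ) - m) ^ (γ - 1) * a m) :
    ∀ n ≤ N, a n ≤ B * ∑' j : ℕ, (lam * ((n : ℝ) * k) ^ γ) ^ j / Real.Gamma (j * γ + 1) := by
  have hw : ∀ n : ℕ, ∀ m < n, 0 ≤ lam / Gamma γ * k ^ γ * ((n : ℝ) - m) ^ (γ - 1) := by
    intro n m hm
    have : (m : ℝ) ≤ n := by exact_mod_cast hm.le
    have := Gamma_pos_of_pos hγ.1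
    exact mul_nonneg (by positivity) (rpow_nonneg (by linarith) _)
  exact le_mul_tsum_of_le_add_sum (c := fun j n => mittagLefflerTerm γ (lam * (n * k) ^ γ) j)
    hB.le hw (by simpa only [mul_sum, mul_assoc] using hrec) (fun _ => mittagLefflerTerm_zero _ _)
    (sum_kernel_mul_mittagLefflerTerm_le hγ.1 hγ.2.le hk hlam.le)
    (fun _ => summable_mittagLefflerTerm hγ.1 _)

/-- Dixon's discrete fractional Grönwall inequality, with the
Mittag-Leffler function `E_γ(z) = ∑_{j=0}^∞ z^j / Γ(jγ + 1)`. -/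
theorem stmt18 (γ k B lam : ℝ) (N : ℕ) (a : ℕ → ℝ)
    (hγ : γ ∈ Set.Ioo (0:ℝ) 1) (hk : 0 < k) (hB : 0 < B) (hlam : 0 < lam)
    (ha : ∀ n ≤ N, 0 ≤ a n)
    (hrec : ∀ n ≤ N, a n ≤ B + lam / Real.Gamma γ * k ^ γ *
      ∑ m ∈ Finset.range n, ((n : ℝ) - m) ^ (γ - 1) * a m) :
    ∀ n ≤ N, a n ≤ B * ∑' j : ℕ, (lam * ((n : ℝ) * k) ^ γ) ^ j / Real.Gamma (j * γ + 1) :=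
  stmt18_general γ k B lam N a hγ hk hB hlam hrec
end

section
/- (Absolute stability of the explicit scheme for the integral equation.) Let γ ∈ (0,1), k > 0, let f be nonnegative, non-decreasing and locally Lipschitz on [0,∞), let u₀ > 0, and let u be the unique solution of D_c^γ u = f(u), u(0) = u₀, on its maximal interval [0, T_b). Define the sequence (uⁿ) by u⁰ = u₀ and uⁿ = u₀ + (k^γ/Γ(1+γ)) ∑_{m=0}^{n−1} f(uᵐ) ((n−m)^γ − (n−m−1)^γ) (or alternatively uⁿ = u₀ + (k^γ/Γ(γ)) ∑_{m=0}^{n−1} f(uᵐ) (n−m)^{γ−1}). Then u^{n−1} ≤ uⁿ ≤ u(nk) for all n with 1 ≤ n < T_b/k. -/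
open MeasureTheory Real Filter Set Asymptotics
open scoped ENNReal Topology

/-!
Both schemes have the convolution form `uⁿ = u₀ + ∑_{m<n} f(uᵐ) ω(n - m)` with nonnegative
weights bounded by the exact product-integration weights
`k^γ / Γ(1+γ) (j^γ - (j-1)^γ) = Γ(γ)⁻¹ ∫_{t-jk}^{t-(j-1)k} (t - s)^(γ-1) ds`
(for the second scheme this is Bernoulli's inequality). Since `f ≥ 0` is non-decreasing, `uⁿ ≥ u₀`
and, comparing the sums for `n` and `n + 1` term by term after a shift of index, `uⁿ ≤ uⁿ⁺¹`.
For the comparison one proves by strong induction the stronger claim `uⁿ ≤ u(t)` for every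
`t ≥ nk`: split `[t - nk, t]` into `n` cells of length `k`; on the `m`-th cell `u ≥ uᵐ` by
induction, so the Volterra integral at `t` dominates the discrete sum. No monotonicity of `u` is
needed.
-/

open Finset intervalIntegral

lemma intervalIntegrable_sub_rpow {γ : ℝ} (hγ : 0 < γ) (τ a b : ℝ) :
    IntervalIntegrable (fun s => (τ - s) ^ (γ - 1)) volume a b := by
  simpa using (intervalIntegrable_rpow' (a := τ - a) (b := τ - b) (r := γ - 1)
    (by linarith)).comp_sub_left τ

lemma integral_sub_rpow {γ : ℝ} (hγ : 0 < γ) (τ a b : ℝ) :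
    ∫ s in a..b, (τ - s) ^ (γ - 1) = ((τ - a) ^ γ - (τ - b) ^ γ) / γ := by
  rw [integral_comp_sub_left (fun x => x ^ (γ - 1)) τ, integral_rpow (Or.inl (by linarith))]
  ring_nf

lemma integral_sub_rpow_cell {γ k : ℝ} (hγ : 0 < γ) (hk : 0 ≤ k) {x : ℝ} (hx : 1 ≤ x) (τ : ℝ) :
    (Gamma γ)⁻¹ * ∫ s in (τ - x * k)..(τ - (x - 1) * k), (τ - s) ^ (γ - 1) =
      k ^ γ / Gamma (1 + γ) * (x ^ γ - (x - 1) ^ γ) := by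
  rw [integral_sub_rpow hγ, sub_sub_cancel, sub_sub_cancel, mul_rpow (by linarith) hk,
    mul_rpow (by linarith) hk, add_comm, Gamma_add_one hγ.ne']
  field_simp

lemma mul_rpow_sub_one_le_rpow_sub_rpow {γ x : ℝ} (hγ0 : 0 ≤ γ) (hγ1 : γ ≤ 1) (hx : 1 ≤ x) :
    γ * x ^ (γ - 1) ≤ x ^ γ - (x - 1) ^ γ := by
  have hx0 : 0 < x := by linarith
  have hbern := rpow_one_add_le_one_add_mul_self (s := -x⁻¹)
    (by linarith [inv_le_one_of_one_le₀ hx]) hγ0 hγ1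
  have hsplit : (x - 1) ^ γ = x ^ γ * (1 + -x⁻¹) ^ γ := by
    rw [← mul_rpow hx0.le (by linarith [inv_le_one_of_one_le₀ hx])]
    field_simp
    ring_nf
  rw [hsplit, rpow_sub_one hx0.ne']
  have := mul_le_mul_of_nonneg_left hbern (rpow_nonneg hx0.le γ)
  have e : x ^ γ * (1 + γ * -x⁻¹) = x ^ γ - γ * (x ^ γ / x) := by field_simp; ring
  linarith

lemma one_le_natCast_sub_natCast {m n : ℕ} (h : m < n) : (1 : ℝ) ≤ n - m := by
  have : (m : ℝ) + 1 ≤ n := by exact_mod_cast h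
  linarith

section ConvolutionScheme

variable {f ω : ℝ → ℝ} {u₀ : ℝ} {useq : ℕ → ℝ}

lemma le_of_convolution_scheme
    (hseq : ∀ n : ℕ, useq n = u₀ + ∑ m ∈ range n, f (useq m) * ω ((n : ℝ) - m))
    (hf : ∀ x ∈ Ici (0 : ℝ), 0 ≤ f x) (hω : ∀ x : ℝ, 1 ≤ x → 0 ≤ ω x) (hu₀ : 0 ≤ u₀) (n : ℕ) :
    u₀ ≤ useq n := by
  induction n using Nat.strong_induction_on with
  | _ n ih =>
    rw [hseq n, le_add_iff_nonneg_right]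
    refine sum_nonneg fun m hm => mul_nonneg (hf _ (hu₀.trans (ih m (mem_range.1 hm))))
      (hω _ (one_le_natCast_sub_natCast (mem_range.1 hm)))

lemma monotone_of_convolution_scheme
    (hseq : ∀ n : ℕ, useq n = u₀ + ∑ m ∈ range n, f (useq m) * ω ((n : ℝ) - m))
    (hf : ∀ x ∈ Ici (0 : ℝ), 0 ≤ f x) (hfmono : MonotoneOn f (Ici 0))
    (hω : ∀ x : ℝ, 1 ≤ x → 0 ≤ ω x) (hu₀ : 0 ≤ u₀) : Monotone useq := by
  have hnonneg (n : ℕ) : 0 ≤ useq n := hu₀.trans (le_of_convolution_scheme hseq hf hω hu₀ n)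
  refine monotone_nat_of_le_succ fun n => ?_
  induction n using Nat.strong_induction_on with
  | _ n ih =>
    have hshift : ∑ m ∈ range (n + 1), f (useq m) * ω (((n + 1 : ℕ) : ℝ) - m) =
        ∑ m ∈ range n, f (useq (m + 1)) * ω ((n : ℝ) - m) + f (useq 0) * ω ((n : ℝ) + 1) := by
      rw [sum_range_succ']
      push_cast
      congr 1
      · exact sum_congr rfl fun m _ => by ring_nf
      · ring_nf
    rw [hseq n, hseq (n + 1), hshift]
    have hlast : 0 ≤ f (useq 0) * ω ((n : ℝ) + 1) :=
      mul_nonneg (hf _ (hnonneg 0)) (hω _ (by linarith [n.cast_nonneg (α := ℝ)]))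
    have hterms : ∑ m ∈ range n, f (useq m) * ω ((n : ℝ) - m) ≤
        ∑ m ∈ range n, f (useq (m + 1)) * ω ((n : ℝ) - m) := by
      gcongr with m hm
      · exact hω _ (one_le_natCast_sub_natCast (mem_range.1 hm))
      · exact hfmono (hnonneg m) (hnonneg (m + 1)) (ih m (mem_range.1 hm))
    linarith

end ConvolutionScheme

section Solution

variable {γ u₀ : ℝ} {f u : ℝ → ℝ} {T : ℝ≥0∞}

lemma IsSolUpTo.intervalIntegrable_kernel_mul (hu : IsSolUpTo γ f (Ici 0) u₀ u T) (hγ : 0 < γ)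
    (hf : ∀ x ∈ Ici (0 : ℝ), 0 ≤ f x) (hfmono : MonotoneOn f (Ici 0)) {a b : ℝ} (ha : 0 ≤ a)
    (hab : a ≤ b) (hbT : ENNReal.ofReal b < T) (τ : ℝ) :
    IntervalIntegrable (fun s => (τ - s) ^ (γ - 1) * f (u s)) volume a b := by
  have hsub : Icc a b ⊆ {t | 0 ≤ t ∧ ENNReal.ofReal t < T} := fun t ht =>
    ⟨ha.trans ht.1, (ENNReal.ofReal_le_ofReal ht.2).trans_lt hbT⟩
  have hcont : ContinuousOn u (Icc a b) := hu.2.1.mono hsub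
  have hmem : ∀ s ∈ Icc a b, 0 ≤ u s := fun s hs => hu.2.2.1 s (hsub hs).1 (hsub hs).2
  obtain ⟨M, hM⟩ := (isCompact_Icc.image_of_continuousOn hcont).bddAbove
  set F : ℝ → ℝ := fun x => f (max x 0)
  have hF : Monotone F := fun x y hxy =>
    hfmono (le_max_right x 0) (le_max_right y 0) (max_le_max_right 0 hxy)
  have hFu : EqOn (F ∘ u) (f ∘ u) (Icc a b) := fun s hs => by
    simp only [F, Function.comp, max_eq_left (hmem s hs)]
  rw [intervalIntegrable_iff_integrableOn_Icc_of_le hab]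
  refine ((intervalIntegrable_iff_integrableOn_Icc_of_le hab).1
    (intervalIntegrable_sub_rpow hγ τ a b)).mul_bdd (c := F M) ?_ ?_
  · exact ((hF.measurable.comp_aemeasurable (hcont.aemeasurable measurableSet_Icc)).congr
      ((ae_restrict_iff' measurableSet_Icc).2 (Eventually.of_forall hFu))).aestronglyMeasurable
  · refine (ae_restrict_iff' measurableSet_Icc).2 (Eventually.of_forall fun s hs => ?_)
    rw [norm_of_nonneg (hf _ (hmem s hs))]
    exact (hFu hs).symm.trans_le (hF (hM ⟨s, hs, rfl⟩))

lemma IsSolUpTo.mul_integral_kernel_le (hu : IsSolUpTo γ f (Ici 0) u₀ u T) (hγ : 0 < γ)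
    (hf : ∀ x ∈ Ici (0 : ℝ), 0 ≤ f x) (hfmono : MonotoneOn f (Ici 0)) {a b t c : ℝ} (ha : 0 ≤ a)
    (hab : a ≤ b) (hbt : b ≤ t) (htT : ENNReal.ofReal t < T) (hc : ∀ s ∈ Icc a b, c ≤ f (u s)) :
    c * ∫ s in a..b, (t - s) ^ (γ - 1) ≤ ∫ s in a..b, (t - s) ^ (γ - 1) * f (u s) := by
  rw [← intervalIntegral.integral_const_mul]
  refine integral_mono_on hab ((intervalIntegrable_sub_rpow hγ t a b).const_mul c)
    (hu.intervalIntegrable_kernel_mul hγ hf hfmono ha hab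
      ((ENNReal.ofReal_le_ofReal hbt).trans_lt htT) t) fun s hs => ?_
  rw [mul_comm c]
  exact mul_le_mul_of_nonneg_left (hc s hs) (rpow_nonneg (by linarith [hs.2]) _)

lemma IsSolUpTo.integral_kernel_mul_le (hu : IsSolUpTo γ f (Ici 0) u₀ u T) (hγ : 0 < γ)
    (hf : ∀ x ∈ Ici (0 : ℝ), 0 ≤ f x) (hfmono : MonotoneOn f (Ici 0)) {a t : ℝ} (ha : 0 ≤ a)
    (hat : a ≤ t) (htT : ENNReal.ofReal t < T) :
    ∫ s in a..t, (t - s) ^ (γ - 1) * f (u s) ≤ ∫ s in (0 : ℝ)..t, (t - s) ^ (γ - 1) * f (u s) := by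
  refine integral_mono_interval ha hat le_rfl ?_
    (hu.intervalIntegrable_kernel_mul hγ hf hfmono le_rfl (ha.trans hat) htT t)
  refine (ae_restrict_iff' measurableSet_Ioc).2 (Eventually.of_forall fun s hs => ?_)
  exact mul_nonneg (rpow_nonneg (by linarith [hs.2]) _)
    (hf _ (hu.2.2.1 s hs.1.le ((ENNReal.ofReal_le_ofReal hs.2).trans_lt htT)))

theorem IsSolUpTo.convolution_scheme_le {k : ℝ} {ω : ℝ → ℝ} {useq : ℕ → ℝ}
    (hu : IsSolUpTo γ f (Ici 0) u₀ u T) (hγ : 0 < γ) (hk : 0 ≤ k)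
    (hf : ∀ x ∈ Ici (0 : ℝ), 0 ≤ f x) (hfmono : MonotoneOn f (Ici 0))
    (hseq : ∀ n : ℕ, useq n = u₀ + ∑ m ∈ range n, f (useq m) * ω ((n : ℝ) - m))
    (hω : ∀ x : ℝ, 1 ≤ x → ω x ≤ k ^ γ / Gamma (1 + γ) * (x ^ γ - (x - 1) ^ γ))
    (hnonneg : ∀ n, 0 ≤ useq n) (n : ℕ) {t : ℝ} (hnt : n * k ≤ t)
    (htT : ENNReal.ofReal t < T) : useq n ≤ u t := by
  induction n using Nat.strong_induction_on generalizing t with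
  | _ n ih =>
    have ht0 : 0 ≤ t := (by positivity : (0 : ℝ) ≤ n * k).trans hnt
    set K : ℝ → ℝ := fun s => (t - s) ^ (γ - 1) * f (u s)
    set a : ℕ → ℝ := fun m => t - ((n : ℝ) - m) * k with ha
    have ha_succ (m : ℕ) : a (m + 1) = t - ((n - m : ℝ) - 1) * k := by
      simp only [ha]; push_cast; ring
    have ha_bounds {m : ℕ} (hm : m < n) :
        0 ≤ m * k ∧ m * k ≤ a m ∧ a m ≤ a (m + 1) ∧ a (m + 1) ≤ t := by
      have := one_le_natCast_sub_natCast hm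
      refine ⟨by positivity, by simp only [ha]; nlinarith,
        by rw [ha_succ]; simp only [ha]; nlinarith, by rw [ha_succ]; nlinarith⟩
    have hcell : ∀ m ∈ range n,
        f (useq m) * ω ((n : ℝ) - m) ≤ (Gamma γ)⁻¹ * ∫ s in a m..a (m + 1), K s := by
      intro m hm
      have hmn := mem_range.1 hm
      obtain ⟨hm0, hma, hmono, hat⟩ := ha_bounds hmn
      have hx := one_le_natCast_sub_natCast hmn
      have hlow : ∀ s ∈ Icc (a m) (a (m + 1)), f (useq m) ≤ f (u s) := fun s hs =>
        have hsT := (ENNReal.ofReal_le_ofReal (hs.2.trans hat)).trans_lt htT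
        hfmono (hnonneg m) (hu.2.2.1 s (hm0.trans (hma.trans hs.1)) hsT)
          (ih m hmn (hma.trans hs.1) hsT)
      calc f (useq m) * ω ((n : ℝ) - m)
          ≤ f (useq m) * ((Gamma γ)⁻¹ * ∫ s in a m..a (m + 1), (t - s) ^ (γ - 1)) := by
            rw [ha_succ, integral_sub_rpow_cell hγ hk hx]
            exact mul_le_mul_of_nonneg_left (hω _ hx) (hf _ (hnonneg m))
        _ ≤ (Gamma γ)⁻¹ * ∫ s in a m..a (m + 1), K s := by
            rw [mul_left_comm]
            gcongr
            exact hu.mul_integral_kernel_le hγ hf hfmono (hm0.trans hma) hmono hat htT hlow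
    have hint (m : ℕ) (hm : m < n) : IntervalIntegrable K volume (a m) (a (m + 1)) :=
      have ⟨hm0, hma, hmono, hat⟩ := ha_bounds hm
      hu.intervalIntegrable_kernel_mul hγ hf hfmono (hm0.trans hma) hmono
        ((ENNReal.ofReal_le_ofReal hat).trans_lt htT) t
    have ha0 : 0 ≤ a 0 := by simp only [ha]; push_cast; linarith
    have han : a n = t := by simp [ha]
    calc useq n = u₀ + ∑ m ∈ range n, f (useq m) * ω ((n : ℝ) - m) := hseq n
      _ ≤ u₀ + ∑ m ∈ range n, (Gamma γ)⁻¹ * ∫ s in a m..a (m + 1), K s := by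
          gcongr 1; exact sum_le_sum hcell
      _ = u₀ + (Gamma γ)⁻¹ * ∫ s in a 0..t, K s := by
          rw [← mul_sum, sum_integral_adjacent_intervals hint, han]
      _ ≤ u₀ + (Gamma γ)⁻¹ * ∫ s in (0 : ℝ)..t, K s := by
          gcongr
          exact hu.integral_kernel_mul_le hγ hf hfmono ha0
            (by simp only [ha]; push_cast; nlinarith [mul_nonneg n.cast_nonneg hk]) htT
      _ = u t := by rw [hu.2.2.2 t ht0 htT, one_div]

end Solution

theorem stmt19_general (γ k u₀ : ℝ) (f : ℝ → ℝ) (u : ℝ → ℝ) (useq : ℕ → ℝ)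
    (hγ : γ ∈ Set.Ioo (0:ℝ) 1) (hk : 0 < k)
    (hfpos : ∀ x ∈ Set.Ici (0:ℝ), 0 ≤ f x)
    (hfmono : MonotoneOn f (Set.Ici 0))
    (hu₀ : 0 < u₀)
    (hu : IsSolUpTo γ f (Set.Ici 0) u₀ u (maxTime γ f (Set.Ici 0) u₀))
    (hscheme :
      (∀ n : ℕ, useq n = u₀ + k ^ γ / Real.Gamma (1 + γ) *
        ∑ m ∈ Finset.range n, f (useq m) * (((n : ℝ) - m) ^ γ - ((n : ℝ) - m - 1) ^ γ)) ∨
      (∀ n : ℕ, useq n = u₀ + k ^ γ / Real.Gamma γ *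
        ∑ m ∈ Finset.range n, f (useq m) * ((n : ℝ) - m) ^ (γ - 1))) :
    ∀ n : ℕ, 1 ≤ n → ENNReal.ofReal (n * k) < maxTime γ f (Set.Ici 0) u₀ →
      useq (n - 1) ≤ useq n ∧ useq n ≤ u (n * k) := by
  obtain ⟨hγ0, hγ1⟩ := hγ
  obtain ⟨ω, hseq, hω0, hω⟩ : ∃ ω : ℝ → ℝ,
      (∀ n : ℕ, useq n = u₀ + ∑ m ∈ range n, f (useq m) * ω ((n : ℝ) - m)) ∧
      (∀ x : ℝ, 1 ≤ x → 0 ≤ ω x) ∧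
      (∀ x : ℝ, 1 ≤ x → ω x ≤ k ^ γ / Gamma (1 + γ) * (x ^ γ - (x - 1) ^ γ)) := by
    rcases hscheme with hs | hs
    · refine ⟨fun x => k ^ γ / Gamma (1 + γ) * (x ^ γ - (x - 1) ^ γ),
        fun n => by rw [hs n, mul_sum]; simp only [mul_left_comm],
        fun x hx => mul_nonneg (by positivity)
          (sub_nonneg.2 (rpow_le_rpow (by linarith) (by linarith) hγ0.le)),
        fun x _ => le_rfl⟩
    · refine ⟨fun x => k ^ γ / Gamma γ * x ^ (γ - 1),
        fun n => by rw [hs n, mul_sum]; simp only [mul_left_comm],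
        fun x hx => by have := rpow_nonneg (zero_le_one.trans hx) (γ - 1); positivity,
        fun x hx => ?_⟩
      rw [add_comm, Gamma_add_one hγ0.ne']
      calc k ^ γ / Gamma γ * x ^ (γ - 1) = k ^ γ / (γ * Gamma γ) * (γ * x ^ (γ - 1)) := by
            field_simp
        _ ≤ _ := by gcongr; exact mul_rpow_sub_one_le_rpow_sub_rpow hγ0.le hγ1.le hx
  have hnonneg (n : ℕ) : 0 ≤ useq n :=
    hu₀.le.trans (le_of_convolution_scheme hseq hfpos hω0 hu₀.le n)
  intro n _ hnT
  exact ⟨monotone_of_convolution_scheme hseq hfpos hfmono hω0 hu₀.le (Nat.sub_le n 1),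
    hu.convolution_scheme_le hγ0 hk.le hfpos hfmono hseq hω hnonneg n le_rfl hnT⟩

/-- absolute stability of the explicit schemes for the integral
equation: the numerical solution is non-decreasing and below the true solution. -/
theorem stmt19 (γ k u₀ : ℝ) (f : ℝ → ℝ) (u : ℝ → ℝ) (useq : ℕ → ℝ)
    (hγ : γ ∈ Set.Ioo (0:ℝ) 1) (hk : 0 < k)
    (hfpos : ∀ x ∈ Set.Ici (0:ℝ), 0 ≤ f x)
    (hfmono : MonotoneOn f (Set.Ici 0))
    (hflip : ∀ x ∈ Set.Ici (0:ℝ), ∃ K : NNReal, ∃ s ∈ 𝓝[Set.Ici (0:ℝ)] x, LipschitzOnWith K f s)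
    (hu₀ : 0 < u₀)
    (hu : IsSolUpTo γ f (Set.Ici 0) u₀ u (maxTime γ f (Set.Ici 0) u₀))
    (hscheme :
      (∀ n : ℕ, useq n = u₀ + k ^ γ / Real.Gamma (1 + γ) *
        ∑ m ∈ Finset.range n, f (useq m) * (((n : ℝ) - m) ^ γ - ((n : ℝ) - m - 1) ^ γ)) ∨
      (∀ n : ℕ, useq n = u₀ + k ^ γ / Real.Gamma γ *
        ∑ m ∈ Finset.range n, f (useq m) * ((n : ℝ) - m) ^ (γ - 1))) :
    ∀ n : ℕ, 1 ≤ n → ENNReal.ofReal (n * k) < maxTime γ f (Set.Ici 0) u₀ →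
      useq (n - 1) ≤ useq n ∧ useq n ≤ u (n * k) :=
  stmt19_general γ k u₀ f u useq hγ hk hfpos hfmono hu₀ hu hscheme
end
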